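/- arXiv:1504.06130 — 2 statements merged into one kernel-verified Lean document; each statement's English description precedes it below -/
import Mathlib

section
/- A self-similar tile set admits only aperiodic tilings: if τ is a tile set implementing a set ρ of N×N macro-tiles with zoom N > 1 via an isomorphism with τ itself, then no τ-tiling T of the plane admits a nonzero period vector p with T(x+p) = T(x) for all x. -/
/-! If a tiling `T` over a self-similar `τ` has period `p`, shifting its unique splitting into
macro-tiles by `p` gives another splitting, so `N ∣ p`. Reading each macro-tile back through `φ⁻¹`
yields a new `τ`-tiling with period `p / N`. Iterating, `N ^ k ∣ p` for every `k`, so `p = 0`. -/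

structure WangTile (C : Type) where
  left : C
  right : C
  bottom : C
  top : C

def IsTiling {C : Type} (τ : Set (WangTile C)) (T : ℤ × ℤ → WangTile C) : Prop :=
  (∀ x, T x ∈ τ) ∧
  (∀ x y : ℤ, (T (x, y)).right = (T (x + 1, y)).left) ∧
  (∀ x y : ℤ, (T (x, y)).top = (T (x, y + 1)).bottom)

def MacroTile (C : Type) (N : ℕ) := Fin N × Fin N → WangTile C

/-- Internal consistency of an `N × N` macro-tile over the tile set `τ`. -/
def IsMacroTileOf {C : Type} {N : ℕ} (τ : Set (WangTile C)) (A : MacroTile C N) : Prop :=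
  (∀ u, A u ∈ τ) ∧
  (∀ u v : Fin N × Fin N, (v.1 : ℕ) = (u.1 : ℕ) + 1 → v.2 = u.2 → (A u).right = (A v).left) ∧
  (∀ u v : Fin N × Fin N, (v.2 : ℕ) = (u.2 : ℕ) + 1 → v.1 = u.1 → (A u).top = (A v).bottom)

/-- Horizontal matching of macro-tiles: the right macro-color of `A` equals the
left macro-color of `B`. -/
def MacroHMatch {C : Type} {N : ℕ} (A B : MacroTile C N) : Prop :=
  ∀ u v : Fin N × Fin N, (u.1 : ℕ) = N - 1 → (v.1 : ℕ) = 0 → u.2 = v.2 →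
    (A u).right = (B v).left

/-- Vertical matching of macro-tiles. -/
def MacroVMatch {C : Type} {N : ℕ} (A B : MacroTile C N) : Prop :=
  ∀ u v : Fin N × Fin N, (u.2 : ℕ) = N - 1 → (v.2 : ℕ) = 0 → u.1 = v.1 →
    (A u).top = (B v).bottom

def SplitsAt {C : Type} {N : ℕ} (ρ : Set (MacroTile C N)) (T : ℤ × ℤ → WangTile C)
    (ab : Fin N × Fin N) : Prop :=
  ∀ i j : ℤ, (fun u : Fin N × Fin N =>
    T (((ab.1 : ℕ) : ℤ) + i * N + ((u.1 : ℕ) : ℤ), ((ab.2 : ℕ) : ℤ) + j * N + ((u.2 : ℕ) : ℤ))) ∈ ρ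

/-- `τ` implements the macro-tile set `ρ` with zoom factor `N`: tilings exist and every
tiling splits uniquely into `N × N` macro-tiles from `ρ`. -/
def Implements {C : Type} (τ : Set (WangTile C)) {N : ℕ} (ρ : Set (MacroTile C N)) : Prop :=
  (∃ T, IsTiling τ T) ∧
  (∀ T, IsTiling τ T → ∃! ab : Fin N × Fin N, SplitsAt ρ T ab)

/-- `τ` is self-similar with zoom `N`: it implements a set `ρ` of `N × N` macro-tiles over
`τ` via a bijection `φ : τ ≃ ρ` under which matching of tiles corresponds to matching
of macro-tiles. -/
def SelfSimilar {C : Type} (τ : Set (WangTile C)) (N : ℕ) : Prop :=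
  ∃ ρ : Set (MacroTile C N), Implements τ ρ ∧ (∀ A ∈ ρ, IsMacroTileOf τ A) ∧
    ∃ φ : {t // t ∈ τ} ≃ {A // A ∈ ρ},
      (∀ s t : {t // t ∈ τ},
        (s : WangTile C).right = (t : WangTile C).left ↔
          MacroHMatch (φ s : MacroTile C N) (φ t : MacroTile C N)) ∧
      (∀ s t : {t // t ∈ τ},
        (s : WangTile C).top = (t : WangTile C).bottom ↔
          MacroVMatch (φ s : MacroTile C N) (φ t : MacroTile C N))

theorem Int.eq_zero_of_forall_pow_dvd {n b : ℤ} (hn : n.natAbs ≠ 1) (h : ∀ k : ℕ, n ^ k ∣ b) :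
    b = 0 := by
  by_contra hb
  obtain ⟨k, hk⟩ := Int.finiteMultiplicity_iff.mpr ⟨hn, hb⟩
  exact hk (h (k + 1))

theorem Fin.exists_intCast_dvd_sub {N : ℕ} (hN : 0 < N) (z : ℤ) :
    ∃ c : Fin N, (N : ℤ) ∣ ((c : ℕ) : ℤ) - z := by
  have hN' : (0 : ℤ) < N := by exact_mod_cast hN
  have hlt := Int.emod_lt_of_pos z hN'
  refine ⟨⟨(z % N).toNat, by omega⟩, ?_⟩
  rw [Fin.val_mk, Int.toNat_of_nonneg (Int.emod_nonneg z hN'.ne'), Int.emod_def]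
  exact ⟨-(z / N), by ring⟩

section

variable {C : Type} {N : ℕ} {τ : Set (WangTile C)} {ρ : Set (MacroTile C N)}

theorem SplitsAt.of_periodic {T : ℤ × ℤ → WangTile C} {p : ℤ × ℤ} (hper : Function.Periodic T p)
    {ab ab' : Fin N × Fin N} (h : SplitsAt ρ T ab)
    (h₁ : (N : ℤ) ∣ ((ab'.1 : ℕ) : ℤ) - (((ab.1 : ℕ) : ℤ) + p.1))
    (h₂ : (N : ℤ) ∣ ((ab'.2 : ℕ) : ℤ) - (((ab.2 : ℕ) : ℤ) + p.2)) :
    SplitsAt ρ T ab' := by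
  obtain ⟨k, hk⟩ := h₁
  obtain ⟨l, hl⟩ := h₂
  intro i j
  convert h (i + k) (j + l) using 2 with u
  refine (congrArg T ?_).trans (hper _)
  refine Prod.ext ?_ ?_
  · dsimp only [Prod.fst_add]
    linear_combination hk
  · dsimp only [Prod.snd_add]
    linear_combination hl

theorem Implements.exists_smul_eq_of_periodic (hρ : Implements τ ρ) {T : ℤ × ℤ → WangTile C}
    (hT : IsTiling τ T) {p : ℤ × ℤ} (hper : Function.Periodic T p) :
    ∃ q : ℤ × ℤ, p = (N : ℤ) • q := by
  obtain ⟨ab, hab, huniq⟩ := hρ.2 T hT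
  obtain ⟨c₁, hc₁⟩ := Fin.exists_intCast_dvd_sub ab.1.pos (((ab.1 : ℕ) : ℤ) + p.1)
  obtain ⟨c₂, hc₂⟩ := Fin.exists_intCast_dvd_sub ab.1.pos (((ab.2 : ℕ) : ℤ) + p.2)
  obtain rfl : (c₁, c₂) = ab := huniq _ (hab.of_periodic hper hc₁ hc₂)
  obtain ⟨k, hk⟩ := hc₁
  obtain ⟨l, hl⟩ := hc₂
  exact ⟨(-k, -l), Prod.ext (by simp only [Prod.smul_fst, smul_eq_mul]; linarith)
    (by simp only [Prod.smul_snd, smul_eq_mul]; linarith)⟩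

def SplitsAt.deflate {T : ℤ × ℤ → WangTile C} {ab : Fin N × Fin N} (h : SplitsAt ρ T ab)
    (φ : {t // t ∈ τ} ≃ {A // A ∈ ρ}) (x : ℤ × ℤ) : WangTile C :=
  φ.symm ⟨fun u => T (((ab.1 : ℕ) : ℤ) + x.1 * N + ((u.1 : ℕ) : ℤ),
    ((ab.2 : ℕ) : ℤ) + x.2 * N + ((u.2 : ℕ) : ℤ)), h x.1 x.2⟩

theorem SplitsAt.isTiling_deflate {T : ℤ × ℤ → WangTile C} {ab : Fin N × Fin N}
    (h : SplitsAt ρ T ab) (hT : IsTiling τ T) (φ : {t // t ∈ τ} ≃ {A // A ∈ ρ})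
    (hH : ∀ s t, MacroHMatch (φ s : MacroTile C N) (φ t) → (s : WangTile C).right = t.1.left)
    (hV : ∀ s t, MacroVMatch (φ s : MacroTile C N) (φ t) → (s : WangTile C).top = t.1.bottom) :
    IsTiling τ (h.deflate φ) := by
  refine ⟨fun x => (φ.symm _).2, fun x y => hH _ _ ?_, fun x y => hV _ _ ?_⟩
  · simp only [Equiv.apply_symm_apply]
    intro u v hu hv huv
    refine (hT.2.1 _ _).trans (congrArg (fun x => (T x).left) (Prod.ext ?_ ?_))
    · have hu' : ((u.1 : ℕ) : ℤ) + 1 = N := by have := u.1.isLt; omega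
      push_cast [hv]
      linear_combination hu'
    · simp [huv]
  · simp only [Equiv.apply_symm_apply]
    intro u v hu hv huv
    refine (hT.2.2 _ _).trans (congrArg (fun x => (T x).bottom) (Prod.ext ?_ ?_))
    · simp [huv]
    · have hu' : ((u.2 : ℕ) : ℤ) + 1 = N := by have := u.2.isLt; omega
      push_cast [hv]
      linear_combination hu'

theorem SplitsAt.periodic_deflate {T : ℤ × ℤ → WangTile C} {ab : Fin N × Fin N}
    (h : SplitsAt ρ T ab) (φ : {t // t ∈ τ} ≃ {A // A ∈ ρ}) {q : ℤ × ℤ}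
    (hper : Function.Periodic T ((N : ℤ) • q)) : Function.Periodic (h.deflate φ) q := by
  intro x
  simp only [SplitsAt.deflate]
  congr 3
  funext u
  refine (congrArg T (Prod.ext ?_ ?_)).trans (hper _)
  · simp only [Prod.fst_add, Prod.smul_fst, smul_eq_mul]
    ring
  · simp only [Prod.snd_add, Prod.smul_snd, smul_eq_mul]
    ring

theorem SelfSimilar.exists_periodic_deflation (hss : SelfSimilar τ N) {T : ℤ × ℤ → WangTile C}
    (hT : IsTiling τ T) {p : ℤ × ℤ} (hper : Function.Periodic T p) :
    ∃ U q, IsTiling τ U ∧ Function.Periodic U q ∧ p = (N : ℤ) • q := by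
  obtain ⟨ρ, hρ, -, φ, hH, hV⟩ := hss
  obtain ⟨ab, hab, -⟩ := hρ.2 T hT
  obtain ⟨q, rfl⟩ := hρ.exists_smul_eq_of_periodic hT hper
  exact ⟨hab.deflate φ, q, hab.isTiling_deflate hT φ (fun s t => (hH s t).2)
    (fun s t => (hV s t).2), hab.periodic_deflate φ hper, rfl⟩

theorem SelfSimilar.exists_pow_smul_eq_of_periodic (hss : SelfSimilar τ N)
    {T : ℤ × ℤ → WangTile C} (hT : IsTiling τ T) {p : ℤ × ℤ} (hper : Function.Periodic T p)
    (k : ℕ) : ∃ q : ℤ × ℤ, p = ((N : ℤ) ^ k) • q := by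
  induction k generalizing T p with
  | zero => exact ⟨p, by rw [pow_zero, one_smul]⟩
  | succ k ih =>
    obtain ⟨U, q, hU, hUper, rfl⟩ := hss.exists_periodic_deflation hT hper
    obtain ⟨r, rfl⟩ := ih hU hUper
    exact ⟨r, by rw [smul_smul, pow_succ']⟩

end

/-- A self-similar tile set admits only aperiodic tilings. -/
theorem selfSimilar_aperiodic {C : Type} (N : ℕ) (hN : 1 < N)
    (τ : Set (WangTile C)) (hss : SelfSimilar τ N)
    (T : ℤ × ℤ → WangTile C) (hT : IsTiling τ T)
    (p : ℤ × ℤ) (hp : p ≠ 0) (hper : ∀ x : ℤ × ℤ, T (x + p) = T x) : False := by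
  have hdvd (k : ℕ) : (N : ℤ) ^ k ∣ p.1 ∧ (N : ℤ) ^ k ∣ p.2 := by
    obtain ⟨q, rfl⟩ := hss.exists_pow_smul_eq_of_periodic hT hper k
    exact ⟨dvd_mul_right _ _, dvd_mul_right _ _⟩
  have hN' : (N : ℤ).natAbs ≠ 1 := by omega
  exact hp (Prod.ext (Int.eq_zero_of_forall_pow_dvd hN' fun k => (hdvd k).1)
    (Int.eq_zero_of_forall_pow_dvd hN' fun k => (hdvd k).2))
end

section
/- If a self-similar tile set τ with zoom N has the property that for every k, every 2×2 pattern of rank-k macro-tiles occurring in a tiling F occurs inside every rank-(k+1) macro-tile of F, then F is quasiperiodic, with recurrence bound: every pattern of diameter < Nᵏ occurs in every square of side 3·Nᵏ⁺¹. -/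
def OccursAt {A : Type} (F : ℤ × ℤ → A) (D : Finset (ℤ × ℤ)) (P : ℤ × ℤ → A)
    (v : ℤ × ℤ) : Prop :=
  ∀ d ∈ D, F (v + d) = P d

def OccursInSquare {A : Type} (F : ℤ × ℤ → A) (D : Finset (ℤ × ℤ)) (P : ℤ × ℤ → A)
    (c : ℤ × ℤ) (L : ℕ) : Prop :=
  ∃ v : ℤ × ℤ, OccursAt F D P v ∧
    ∀ d ∈ D, c.1 ≤ v.1 + d.1 ∧ v.1 + d.1 < c.1 + L ∧ c.2 ≤ v.2 + d.2 ∧ v.2 + d.2 < c.2 + L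

def UniformlyRecurrent {A : Type} (F : ℤ × ℤ → A) : Prop :=
  ∀ (D : Finset (ℤ × ℤ)) (P : ℤ × ℤ → A), (∃ v, OccursAt F D P v) →
    ∃ L : ℕ, ∀ c : ℤ × ℤ, OccursInSquare F D P c L

def AgreesOn {A : Type} (F : ℤ × ℤ → A) (p q : ℤ × ℤ) (s : ℕ) : Prop :=
  ∀ u : ℤ × ℤ, 0 ≤ u.1 → u.1 < s → 0 ≤ u.2 → u.2 < s → F (p + u) = F (q + u)

def InSquare (c : ℤ × ℤ) (L : ℕ) (p : ℤ × ℤ) (s : ℕ) : Prop :=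
  c.1 ≤ p.1 ∧ p.1 + s ≤ c.1 + L ∧ c.2 ≤ p.2 ∧ p.2 + s ≤ c.2 + L


/-!
Cover the pattern by a grid-aligned 2×2 block of rank-`k` macro-tiles, note that every square
of side `3·N^(k+1)` contains a whole rank-`(k+1)` macro-tile, and copy the pattern into the
occurrence of that 2×2 block inside this macro-tile. Quasiperiodicity follows since every
finite pattern has diameter `< N^k` for some `k`.
-/

lemma InSquare.trans {c p x : ℤ × ℤ} {L s t : ℕ} (hp : InSquare c L p s)
    (hx : InSquare p s x t) : InSquare c L x t := by
  unfold InSquare at *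
  omega

lemma occursInSquare_iff {A : Type} (F : ℤ × ℤ → A) (D : Finset (ℤ × ℤ))
    (P : ℤ × ℤ → A) (c : ℤ × ℤ) (L : ℕ) :
    OccursInSquare F D P c L ↔
      ∃ v, OccursAt F D P v ∧ ∀ d ∈ D, InSquare c L (v + d) 1 := by
  unfold OccursInSquare InSquare
  simp only [Prod.fst_add, Prod.snd_add, Nat.cast_one, Int.add_one_le_iff]

lemma OccursAt.of_agreesOn {A : Type} {F : ℤ × ℤ → A} {D : Finset (ℤ × ℤ)}
    {P : ℤ × ℤ → A} {v p q : ℤ × ℤ} {s : ℕ} (hv : OccursAt F D P v)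
    (hpq : AgreesOn F p q s) (hD : ∀ d ∈ D, InSquare q s (v + d) 1) :
    OccursAt F D P (v + (p - q)) := by
  intro d hd
  have hu := hD d hd
  simp only [InSquare, Prod.fst_add, Prod.snd_add, Nat.cast_one] at hu
  have key := hpq (v + d - q)
  simp only [Prod.fst_sub, Prod.snd_sub, Prod.fst_add, Prod.snd_add] at key
  rw [← hv d hd, ← add_sub_cancel q (v + d), ← key (by omega) (by omega) (by omega) (by omega)]
  congr 1
  abel

lemma exists_grid_le_lt (a x : ℤ) {M : ℤ} (hM : 0 < M) :
    ∃ s : ℤ, a + s * M ≤ x ∧ x < a + s * M + M :=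
  ⟨(x - a) / M, by
    have hle := Int.ediv_mul_le (x - a) hM.ne'
    have hlt := Int.lt_ediv_add_one_mul_self (x - a) hM
    constructor <;> linarith⟩

/-- A set of integers of diameter `< M` lies in two consecutive cells of any grid of mesh `M`:
the cell of its minimum and the next one. -/
lemma exists_grid_window {ι : Type} (D : Finset ι) (f : ι → ℤ) (a : ℤ) {M : ℤ}
    (hM : 0 < M) (hD : ∀ d ∈ D, ∀ d' ∈ D, f d - f d' < M) :
    ∃ s : ℤ, ∀ d ∈ D, a + s * M ≤ f d ∧ f d < a + s * M + 2 * M := by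
  rcases D.eq_empty_or_nonempty with rfl | hne
  · exact ⟨0, by simp⟩
  obtain ⟨d₀, hd₀, hmin⟩ := D.exists_min_image f hne
  obtain ⟨s, hs₁, hs₂⟩ := exists_grid_le_lt a (f d₀) hM
  refine ⟨s, fun d hd => ⟨?_, ?_⟩⟩
  · linarith [hmin d hd]
  · linarith [hD d hd d₀ hd₀]

lemma exists_grid_cell_le (a c : ℤ) {L : ℤ} (hL : 0 < L) :
    ∃ i : ℤ, c ≤ a + i * L ∧ a + i * L + L ≤ c + 2 * L := by
  obtain ⟨s, hs₁, hs₂⟩ := exists_grid_le_lt a c hL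
  exact ⟨s + 1, by linarith, by linarith⟩

lemma exists_aligned_block (D : Finset (ℤ × ℤ)) (v a : ℤ × ℤ) {M : ℕ} (hM : 0 < M)
    (hD : ∀ d ∈ D, ∀ d' ∈ D, d.1 - d'.1 < M ∧ d.2 - d'.2 < M) :
    ∃ i j : ℤ, ∀ d ∈ D, InSquare (a.1 + i * M, a.2 + j * M) (2 * M) (v + d) 1 := by
  have hM' : (0 : ℤ) < M := by exact_mod_cast hM
  obtain ⟨i, hi⟩ := exists_grid_window D (fun d => v.1 + d.1) a.1 hM'
    fun d hd d' hd' => by linarith [(hD d hd d' hd').1]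
  obtain ⟨j, hj⟩ := exists_grid_window D (fun d => v.2 + d.2) a.2 hM'
    fun d hd d' hd' => by linarith [(hD d hd d' hd').2]
  refine ⟨i, j, fun d hd => ?_⟩
  have := hi d hd
  have := hj d hd
  simp only [InSquare, Prod.fst_add, Prod.snd_add, Nat.cast_one, Nat.cast_mul, Nat.cast_ofNat]
  omega

lemma exists_cell_inSquare (b c : ℤ × ℤ) {L : ℕ} (hL : 0 < L) :
    ∃ i j : ℤ, InSquare c (3 * L) (b.1 + i * L, b.2 + j * L) L := by
  have hL' : (0 : ℤ) < L := by exact_mod_cast hL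
  obtain ⟨i, hi₁, hi₂⟩ := exists_grid_cell_le b.1 c.1 hL'
  obtain ⟨j, hj₁, hj₂⟩ := exists_grid_cell_le b.2 c.2 hL'
  refine ⟨i, j, ?_⟩
  simp only [InSquare, Nat.cast_mul, Nat.cast_ofNat]
  omega

/-- The recurrence bound at a single rank: `M` is the side of the small macro-tiles (grid
origin `a`), `L` that of the large ones (grid origin `b`). -/
theorem occursInSquare_of_blocks_recur {A : Type} {F : ℤ × ℤ → A} {M L : ℕ} (hM : 0 < M)
    (hL : 0 < L) {a b : ℤ × ℤ}
    (hrec : ∀ i j i' j' : ℤ, ∃ p : ℤ × ℤ,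
      InSquare (b.1 + i' * L, b.2 + j' * L) L p (2 * M) ∧
      AgreesOn F p (a.1 + i * M, a.2 + j * M) (2 * M))
    {D : Finset (ℤ × ℤ)} (hD : ∀ d ∈ D, ∀ d' ∈ D, d.1 - d'.1 < M ∧ d.2 - d'.2 < M)
    {P : ℤ × ℤ → A} {v : ℤ × ℤ} (hv : OccursAt F D P v) (c : ℤ × ℤ) :
    OccursInSquare F D P c (3 * L) := by
  obtain ⟨i, j, hblock⟩ := exists_aligned_block D v a hM hD
  obtain ⟨i', j', hcell⟩ := exists_cell_inSquare b c hL
  obtain ⟨p, hp, hagree⟩ := hrec i j i' j'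
  refine (occursInSquare_iff ..).2
    ⟨_, hv.of_agreesOn hagree hblock, fun d hd => hcell.trans (hp.trans ?_)⟩
  have := hblock d hd
  simp only [InSquare, Prod.fst_add, Prod.snd_add, Prod.fst_sub, Prod.snd_sub] at this ⊢
  omega

lemma exists_pow_gt_coord_diff (D : Finset (ℤ × ℤ)) {N : ℤ} (hN : 1 < N) :
    ∃ k : ℕ, ∀ d ∈ D, ∀ d' ∈ D, d.1 - d'.1 < N ^ k ∧ d.2 - d'.2 < N ^ k := by
  obtain ⟨B, hB⟩ := ((D ×ˢ D).image fun e => max (e.1.1 - e.2.1) (e.1.2 - e.2.2)).bddAbove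
  obtain ⟨k, hk⟩ := pow_unbounded_of_one_lt B hN
  refine ⟨k, fun d hd d' hd' => ?_⟩
  have := hB (Finset.mem_image_of_mem _ (Finset.mk_mem_product hd hd'))
  simp only [max_le_iff] at this
  constructor <;> linarith [this.1, this.2]

theorem quantitative_quasiperiodicity_general {C : Type} (N : ℕ) (hN : 2 ≤ N)
    (F : ℤ × ℤ → WangTile C)
    (a : ℕ → ℤ × ℤ)
    (hrec : ∀ (k : ℕ) (i j i' j' : ℤ), ∃ p : ℤ × ℤ,
      (∃ s t : ℤ, p = ((a k).1 + s * (N : ℤ) ^ k, (a k).2 + t * (N : ℤ) ^ k)) ∧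
      InSquare ((a (k + 1)).1 + i' * (N : ℤ) ^ (k + 1),
                (a (k + 1)).2 + j' * (N : ℤ) ^ (k + 1))
        (N ^ (k + 1)) p (2 * N ^ k) ∧
      AgreesOn F p ((a k).1 + i * (N : ℤ) ^ k, (a k).2 + j * (N : ℤ) ^ k) (2 * N ^ k)) :
    (∀ k : ℕ, ∀ D : Finset (ℤ × ℤ),
      (∀ d ∈ D, ∀ d' ∈ D, d.1 - d'.1 < (N : ℤ) ^ k ∧ d.2 - d'.2 < (N : ℤ) ^ k) →
      ∀ P : ℤ × ℤ → WangTile C, (∃ v, OccursAt F D P v) →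
      ∀ c : ℤ × ℤ, OccursInSquare F D P c (3 * N ^ (k + 1))) ∧
    UniformlyRecurrent F := by
  have hbound : ∀ k : ℕ, ∀ D : Finset (ℤ × ℤ),
      (∀ d ∈ D, ∀ d' ∈ D, d.1 - d'.1 < (N : ℤ) ^ k ∧ d.2 - d'.2 < (N : ℤ) ^ k) →
      ∀ P : ℤ × ℤ → WangTile C, (∃ v, OccursAt F D P v) →
      ∀ c : ℤ × ℤ, OccursInSquare F D P c (3 * N ^ (k + 1)) := by
    rintro k D hD P ⟨v, hv⟩ c
    have hblocks : ∀ i j i' j' : ℤ, ∃ p : ℤ × ℤ,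
        InSquare ((a (k + 1)).1 + i' * ↑(N ^ (k + 1)), (a (k + 1)).2 + j' * ↑(N ^ (k + 1)))
          (N ^ (k + 1)) p (2 * N ^ k) ∧
        AgreesOn F p ((a k).1 + i * ↑(N ^ k), (a k).2 + j * ↑(N ^ k)) (2 * N ^ k) := by
      intro i j i' j'
      obtain ⟨p, -, hp⟩ := hrec k i j i' j'
      exact ⟨p, by exact_mod_cast hp⟩
    exact occursInSquare_of_blocks_recur (by positivity) (by positivity) hblocks
      (by exact_mod_cast hD) hv c
  refine ⟨hbound, fun D P hocc => ?_⟩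
  obtain ⟨k, hk⟩ := exists_pow_gt_coord_diff D (by exact_mod_cast hN : (1 : ℤ) < N)
  exact ⟨_, hbound k D hk P hocc⟩

/-- Quantitative recurrence for hierarchical tilings. Suppose `F` is a tiling by a
self-similar tile set with zoom `N`, with rank-`k` grid origins `a k` (each rank-`(k+1)`
grid refining the rank-`k` grid). If for every `k` each occurring 2×2 pattern of rank-`k`
macro-tiles (a grid-aligned `2N^k × 2N^k` square of `F`) occurs, grid-aligned, inside every
rank-`(k+1)` macro-tile of `F`, then every pattern of diameter `< N^k` occurs in every
square of side `3·N^(k+1)`; in particular `F` is quasiperiodic. -/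
theorem quantitative_quasiperiodicity {C : Type} (N : ℕ) (hN : 2 ≤ N)
    (τ : Set (WangTile C)) (F : ℤ × ℤ → WangTile C) (hF : IsTiling τ F)
    (a : ℕ → ℤ × ℤ)
    (halign : ∀ k : ℕ, (N : ℤ) ^ k ∣ ((a (k + 1)).1 - (a k).1) ∧
      (N : ℤ) ^ k ∣ ((a (k + 1)).2 - (a k).2))
    (hrec : ∀ (k : ℕ) (i j i' j' : ℤ), ∃ p : ℤ × ℤ,
      (∃ s t : ℤ, p = ((a k).1 + s * (N : ℤ) ^ k, (a k).2 + t * (N : ℤ) ^ k)) ∧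
      InSquare ((a (k + 1)).1 + i' * (N : ℤ) ^ (k + 1),
                (a (k + 1)).2 + j' * (N : ℤ) ^ (k + 1))
        (N ^ (k + 1)) p (2 * N ^ k) ∧
      AgreesOn F p ((a k).1 + i * (N : ℤ) ^ k, (a k).2 + j * (N : ℤ) ^ k) (2 * N ^ k)) :
    (∀ k : ℕ, ∀ D : Finset (ℤ × ℤ),
      (∀ d ∈ D, ∀ d' ∈ D, d.1 - d'.1 < (N : ℤ) ^ k ∧ d.2 - d'.2 < (N : ℤ) ^ k) →
      ∀ P : ℤ × ℤ → WangTile C, (∃ v, OccursAt F D P v) →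
      ∀ c : ℤ × ℤ, OccursInSquare F D P c (3 * N ^ (k + 1))) ∧
    UniformlyRecurrent F :=
  quantitative_quasiperiodicity_general N hN F a hrec
end
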